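/- arXiv:math/0205089 — 2 statements merged into one kernel-verified Lean document; each statement's English description precedes it below -/
import Mathlib

section
/- If f ∈ Θ and a ∈ Θ is a homogeneous polynomial of degree N, then the formal derivative with respect to q of E(a·f) equals a · (E f); equivalently, E(a·f) is obtained from a · E f by formal integration in q from 0 to q. -/
variable {σ : Type*}

/-- Total degree of a monomial. -/
def monDeg (d : σ →₀ ℕ) : ℕ := d.sum fun _ n => n

/-- `Θ`: series whose coefficients vanish in degrees not divisible by `N`. -/
def InTheta (N : ℕ) (f : MvPowerSeries σ ℚ) : Prop :=
  ∀ d : σ →₀ ℕ, ¬ (N ∣ monDeg d) → MvPowerSeries.coeff d f = 0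

/-- `f^(k)`: homogeneous component of total degree `N * k`. -/
noncomputable def homComp (N : ℕ) (f : MvPowerSeries σ ℚ) (k : ℕ) : MvPowerSeries σ ℚ :=
  fun d => if monDeg d = N * k then MvPowerSeries.coeff d f else 0

/-- The operation `⊙`: `f ⊙ g = Σ_{k,ℓ} C(k+ℓ,k) f^(k) g^(ℓ)`, defined coefficientwise
(at a monomial of total degree `m`, only indices `k, ℓ ≤ m` can contribute, for `N ≥ 1`). -/
noncomputable def odot (N : ℕ) (f g : MvPowerSeries σ ℚ) : MvPowerSeries σ ℚ :=
  fun d => ∑ k ∈ Finset.range (monDeg d + 1), ∑ l ∈ Finset.range (monDeg d + 1),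
    ((k + l).choose k : ℚ) * MvPowerSeries.coeff d (homComp N f k * homComp N g l)

/-- The `E`-transform: `E f = Σ_k (q^k / k!) f^(k)`. -/
noncomputable def Etrans (N : ℕ) (f : MvPowerSeries σ ℚ) :
    PowerSeries (MvPowerSeries σ ℚ) :=
  PowerSeries.mk fun k => (k.factorial : ℚ)⁻¹ • homComp N f k

/-- `exp(q·u) = Σ_k (q^k / k!) u^k`. -/
noncomputable def expQ (u : MvPowerSeries σ ℚ) : PowerSeries (MvPowerSeries σ ℚ) :=
  PowerSeries.mk fun k => (k.factorial : ℚ)⁻¹ • u ^ k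

/-- A homogeneous polynomial of degree `N`: finitely many nonzero coefficients,
all in total degree exactly `N`. -/
def IsHomogDeg (N : ℕ) (a : MvPowerSeries σ ℚ) : Prop :=
  {d : σ →₀ ℕ | MvPowerSeries.coeff d a ≠ 0}.Finite ∧
    ∀ d : σ →₀ ℕ, MvPowerSeries.coeff d a ≠ 0 → monDeg d = N

/-- Iterated `⊙`-product of a nonempty list. -/
noncomputable def odotList (N : ℕ) : List (MvPowerSeries σ ℚ) → MvPowerSeries σ ℚ
  | [] => 1
  | [f] => f
  | f :: g :: rest => odot N f (odotList N (g :: rest))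

/-! Multiplying by a form of degree `N` shifts the homogeneous components by one,
`(a * f)^(k+1) = a * f^(k)`, and differentiating an exponential generating function
shifts its coefficients back by one. -/

open PowerSeries in
theorem PowerSeries.derivative_mk_inv_factorial_smul {A : Type*} [CommSemiring A] [Algebra ℚ A]
    (g : ℕ → A) :
    derivative A (mk fun k => (k.factorial : ℚ)⁻¹ • g k) =
      mk fun k => (k.factorial : ℚ)⁻¹ • g (k + 1) := by
  ext k
  have hk : ((k + 1 : ℕ) : ℚ) ≠ 0 := Nat.cast_ne_zero.mpr k.succ_ne_zero
  rw [coeff_derivative, coeff_mk, coeff_mk, ← Nat.cast_succ, mul_comm, ← nsmul_eq_mul,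
    ← Nat.cast_smul_eq_nsmul ℚ, smul_smul, Nat.factorial_succ, Nat.cast_mul, mul_inv,
    mul_inv_cancel_left₀ hk]

lemma monDeg_add (x y : σ →₀ ℕ) : monDeg (x + y) = monDeg x + monDeg y :=
  Finsupp.sum_add_index' (fun _ => rfl) (fun _ _ _ => rfl)

lemma coeff_homComp (N k : ℕ) (f : MvPowerSeries σ ℚ) (d : σ →₀ ℕ) :
    MvPowerSeries.coeff d (homComp N f k) =
      if monDeg d = N * k then MvPowerSeries.coeff d f else 0 :=
  rfl

lemma homComp_mul_succ_of_homogeneous {N : ℕ} {a : MvPowerSeries σ ℚ}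
    (ha : ∀ d, MvPowerSeries.coeff d a ≠ 0 → monDeg d = N) (f : MvPowerSeries σ ℚ) (k : ℕ) :
    homComp N (a * f) (k + 1) = a * homComp N f k := by
  classical
  ext d
  rw [coeff_homComp, MvPowerSeries.coeff_mul, MvPowerSeries.coeff_mul,
    ← Finset.sum_const_zero (s := Finset.HasAntidiagonal.antidiagonal d), ← Finset.sum_ite_irrel]
  refine Finset.sum_congr rfl fun p hp => ?_
  rw [coeff_homComp]
  by_cases ha0 : MvPowerSeries.coeff p.1 a = 0
  · simp [ha0]
  · have hdeg : monDeg d = N + monDeg p.2 := by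
      rw [← Finset.HasAntidiagonal.mem_antidiagonal.mp hp, monDeg_add, ha p.1 ha0]
    have hiff : monDeg d = N * (k + 1) ↔ monDeg p.2 = N * k := by
      rw [hdeg, mul_add_one]; omega
    by_cases h : monDeg p.2 = N * k <;> simp [h, hiff]

theorem derivative_Etrans_mul_general {σ : Type*} (N : ℕ)
    (f a : MvPowerSeries σ ℚ) (ha : IsHomogDeg N a) :
    PowerSeries.derivative (MvPowerSeries σ ℚ) (Etrans N (a * f)) =
      PowerSeries.C a * Etrans N f := by
  rw [Etrans, PowerSeries.derivative_mk_inv_factorial_smul]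
  ext k
  simp only [PowerSeries.coeff_mk, PowerSeries.coeff_C_mul, Etrans,
    homComp_mul_succ_of_homogeneous ha.2, mul_smul_comm]

/-- if `f ∈ Θ` and `a` is a homogeneous polynomial of degree `N`, then
`(d/dq) E(a·f) = a · E f`. -/
theorem derivative_Etrans_mul {σ : Type*} (N : ℕ) (hN : 1 ≤ N)
    (f a : MvPowerSeries σ ℚ) (hf : InTheta N f) (ha : IsHomogDeg N a) :
    PowerSeries.derivative (MvPowerSeries σ ℚ) (Etrans N (a * f)) =
      PowerSeries.C a * Etrans N f :=
  derivative_Etrans_mul_general N f a ha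
end

section
/- If u ∈ Θ is a homogeneous polynomial of degree N, then 1 − u is invertible in MvPowerSeries σ ℚ, its inverse (1 − u)^{-1} lies in Θ, and E((1 − u)^{-1}) = exp(q·u), where exp(q·u) denotes the formal power series Σ_{k ≥ 0} (q^k / k!) · u^k in q with coefficients in MvPowerSeries σ ℚ. -/
/-! Since `u` is homogeneous of degree `N ≥ 1`, its powers `uᵏ` are homogeneous of the distinct
degrees `N k`, so the geometric series `(1 - u)⁻¹ = ∑ uᵏ` has `uᵏ` as its component of degree
`N k` and no components in degrees not divisible by `N`. -/

variable {σ : Type*}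

open MvPowerSeries Finset Finsupp

theorem monDeg_eq_degree (d : σ →₀ ℕ) : monDeg d = degree d := rfl

theorem homComp_eq_homogeneousComponent (N : ℕ) (f : MvPowerSeries σ ℚ) (k : ℕ) :
    homComp N f k = homogeneousComponent (N * k) f := by
  ext d
  rw [coeff_homogeneousComponent]
  rfl

theorem IsHomogDeg.isHomogeneous {N : ℕ} {u : MvPowerSeries σ ℚ} (hu : IsHomogDeg N u) :
    u.IsHomogeneous N := fun {d} hd => by
  have h := hu.2 d hd
  rwa [monDeg_eq_degree, degree_eq_weight_one] at h

namespace MvPowerSeries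

variable {R k : Type*} [CommSemiring R] [Field k]

theorem isHomogeneous_one : (1 : MvPowerSeries σ R).IsHomogeneous 0 := fun {d} hd => by
  classical
  rw [coeff_one] at hd
  rw [(ite_ne_right_iff.mp hd).1, map_zero]

theorem IsHomogeneous.pow {f : MvPowerSeries σ R} {p : ℕ} (hf : f.IsHomogeneous p) (n : ℕ) :
    (f ^ n).IsHomogeneous (p * n) := by
  induction n with
  | zero => exact isHomogeneous_one
  | succ n ih =>
    rw [pow_succ, mul_add, mul_one]
    exact IsHomogeneous.mul ih hf

theorem IsHomogeneous.constantCoeff_eq_zero {f : MvPowerSeries σ R} {p : ℕ}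
    (hf : f.IsHomogeneous p) (hp : p ≠ 0) : constantCoeff f = 0 := by
  rw [← coeff_zero_eq_constantCoeff_apply]
  exact hf.coeff_eq_zero (by simpa using hp.symm)

/-- The tail `fⁿ (1 - f)⁻¹` of the geometric series has order at least `n > degree d`. -/
theorem coeff_inv_one_sub {f : MvPowerSeries σ k} (hf : constantCoeff f = 0) (d : σ →₀ ℕ) :
    coeff d (1 - f)⁻¹ = ∑ n ∈ range (degree d + 1), coeff d (f ^ n) := by
  have hunit : constantCoeff (1 - f) ≠ 0 := by simp [hf]
  have hgeom : (1 - f ^ (degree d + 1)) * (1 - f)⁻¹ = ∑ n ∈ range (degree d + 1), f ^ n := by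
    rw [← geom_sum_mul_neg, mul_assoc, MvPowerSeries.mul_inv_cancel _ hunit, mul_one]
  rw [← map_sum, ← hgeom, coeff_mul_right_one_sub_of_lt_order]
  exact lt_of_lt_of_le (by exact_mod_cast lt_add_one _)
    (le_order_pow_of_constantCoeff_eq_zero _ hf)

variable {N : ℕ} {u : MvPowerSeries σ k}

theorem coeff_inv_one_sub_of_isHomogeneous (hu : u.IsHomogeneous N) (hN : 0 < N)
    {d : σ →₀ ℕ} {n : ℕ} (hd : degree d = N * n) : coeff d (1 - u)⁻¹ = coeff d (u ^ n) := by
  rw [coeff_inv_one_sub (hu.constantCoeff_eq_zero hN.ne'), sum_eq_single_of_mem n]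
  · rw [mem_range, hd]
    exact Nat.lt_succ_of_le (Nat.le_mul_of_pos_left n hN)
  · intro m _ hmn
    refine IsHomogeneous.coeff_eq_zero (hu.pow m) fun h => hmn ?_
    exact Nat.eq_of_mul_eq_mul_left hN (h.symm.trans hd)

theorem coeff_inv_one_sub_of_not_dvd (hu : u.IsHomogeneous N) (hN : 0 < N)
    {d : σ →₀ ℕ} (hd : ¬ N ∣ degree d) : coeff d (1 - u)⁻¹ = 0 := by
  rw [coeff_inv_one_sub (hu.constantCoeff_eq_zero hN.ne')]
  exact sum_eq_zero fun n _ => IsHomogeneous.coeff_eq_zero (hu.pow n) fun h => hd ⟨n, h⟩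

theorem homogeneousComponent_inv_one_sub (hu : u.IsHomogeneous N) (hN : 0 < N) (n : ℕ) :
    homogeneousComponent (N * n) (1 - u)⁻¹ = u ^ n := by
  ext d
  rw [coeff_homogeneousComponent]
  split_ifs with hd
  · exact coeff_inv_one_sub_of_isHomogeneous hu hN hd
  · exact (IsHomogeneous.coeff_eq_zero (hu.pow n) hd).symm

end MvPowerSeries

/-- for `u` homogeneous of degree `N`, `1 - u` is invertible, its inverse
lies in `Θ`, and `E((1-u)⁻¹) = exp(q·u)`. -/
theorem Etrans_inv_one_sub {σ : Type*} (N : ℕ) (hN : 1 ≤ N)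
    (u : MvPowerSeries σ ℚ) (hu : IsHomogDeg N u) :
    IsUnit (1 - u) ∧ InTheta N (1 - u)⁻¹ ∧ Etrans N ((1 - u)⁻¹) = expQ u := by
  have hu : u.IsHomogeneous N := hu.isHomogeneous
  refine ⟨?_, fun d hd => coeff_inv_one_sub_of_not_dvd hu hN hd, ?_⟩
  · rw [isUnit_iff_constantCoeff, map_sub, map_one,
      hu.constantCoeff_eq_zero (Nat.one_le_iff_ne_zero.mp hN), sub_zero]
    exact isUnit_one
  · ext n : 1
    rw [Etrans, expQ, PowerSeries.coeff_mk, PowerSeries.coeff_mk, homComp_eq_homogeneousComponent,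
      homogeneousComponent_inv_one_sub hu hN]
end
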